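/- Let A₁ and A₂ be VRAs over the same pushdown alphabet with disjoint procedural alphabets, and let B be the product VRA whose procedural symbols are pairs ⟨J₁, J₂⟩ with f₁(J₁) = f₂(J₂), whose component automaton B^{⟨J₁,J₂⟩} is the product automaton of A₁^{J₁} and A₂^{J₂} (with procedural transitions on ⟨K₁,K₂⟩ present iff both factors have procedural transitions on K₁ and K₂ respectively), and whose starting automaton is the analogous product of A₁^S and A₂^S. Then for every well-matched word w and product states ⟨q₁,q₂⟩, ⟨p₁,p₂⟩: ⟨⟨q₁,q₂⟩, ε⟩ →^w ⟨⟨p₁,p₂⟩, ε⟩ is a recursive run of B iff ⟨q₁, ε⟩ →^w ⟨p₁, ε⟩ is a recursive run of A₁ and ⟨q₂, ε⟩ →^w ⟨p₂, ε⟩ is a recursive run of A₂. Consequently, L(B) = L(A₁) ∩ L(A₂). -/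

import Mathlib

/-- A symbol of a pushdown alphabet: internal, call, or return. -/
inductive VSym (I C R : Type) : Type
  | int  : I → VSym I C R
  | call : C → VSym I C R
  | ret  : R → VSym I C R

/-- The set of well-matched words over a pushdown alphabet. -/
inductive WellMatched {I C R : Type} : List (VSym I C R) → Prop
  | internal (u : List I) : WellMatched (u.map VSym.int)
  | bracket {w : List (VSym I C R)} (c : C) (r : R) :
      WellMatched w → WellMatched (VSym.call c :: w ++ [VSym.ret r])
  | concat {w₁ w₂ : List (VSym I C R)} :
      WellMatched w₁ → WellMatched w₂ → WellMatched (w₁ ++ w₂)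

def VSym.isCall {I C R : Type} : VSym I C R → Bool
  | .call _ => true
  | _ => false

def VSym.isRet {I C R : Type} : VSym I C R → Bool
  | .ret _ => true
  | _ => false

/-- The depth of a word: the maximal excess of call symbols over return symbols
in any prefix (the deepest level of unmatched calls at any point). -/
def VSym.depth {I C R : Type} (w : List (VSym I C R)) : ℕ :=
  (w.inits.map fun p => p.countP VSym.isCall - p.countP VSym.isRet).foldr max 0

/-- A visibly recursive automaton: a family of finite automata over the internal
and procedural symbols, identified by the component map `comp` (`none` denotes the
starting automaton `A^S`, `some J` the component automaton `A^J`), together with a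
linking function `link` assigning to each procedural symbol a call/return pair.
Transitions of each component automaton stay within that component. -/
structure VRA (I C R P Q : Type) where
  /-- the linking function `f : Σ_proc → Σ_call × Σ_ret` -/
  link : P → C × R
  /-- the component automaton each state belongs to (`none` = starting automaton) -/
  comp : Q → Option P
  init : Q → Prop
  final : Q → Prop
  intTrans : Q → I → Q → Prop
  procTrans : Q → P → Q → Prop
  intTrans_comp : ∀ ⦃q a p⦄, intTrans q a p → comp p = comp q
  procTrans_comp : ∀ ⦃q J p⦄, procTrans q J p → comp p = comp q

namespace VRA

variable {I C R P Q : Type}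

/-- One step of a recursive run, on configurations (state, stack of states). -/
inductive Step (A : VRA I C R P Q) : Q × List Q → VSym I C R → Q × List Q → Prop
  | int {q q' : Q} {σ : List Q} {a : I} :
      A.intTrans q a q' → Step A (q, σ) (VSym.int a) (q', σ)
  | call {q q' p : Q} {σ : List Q} {J : P} {c : C} :
      A.procTrans q J p → (A.link J).1 = c → A.comp q' = some J → A.init q' →
      Step A (q, σ) (VSym.call c) (q', p :: σ)
  | ret {q p : Q} {σ : List Q} {J : P} {r : R} :
      A.comp q = some J → A.final q → (A.link J).2 = r →
      Step A (q, p :: σ) (VSym.ret r) (p, σ)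

/-- Recursive runs of a VRA. -/
inductive Run (A : VRA I C R P Q) : Q × List Q → List (VSym I C R) → Q × List Q → Prop
  | nil (cfg : Q × List Q) : Run A cfg [] cfg
  | cons {cfg₁ cfg₂ cfg₃ : Q × List Q} {a : VSym I C R} {w : List (VSym I C R)} :
      Step A cfg₁ a cfg₂ → Run A cfg₂ w cfg₃ → Run A cfg₁ (a :: w) cfg₃

/-- The recursive language of the component automaton `A^J` (`J = none` is the
starting automaton): words with a recursive run from an initial state of the
component with empty stack to a final state of the component with empty stack. -/
def RecLang (A : VRA I C R P Q) (J : Option P) : Set (List (VSym I C R)) :=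
  {w | ∃ qi qf, A.comp qi = J ∧ A.init qi ∧ A.comp qf = J ∧ A.final qf ∧
    Run A (qi, []) w (qf, [])}

/-- The language of a VRA: the recursive language of its starting automaton. -/
def Lang (A : VRA I C R P Q) : Set (List (VSym I C R)) := A.RecLang none

/-- Regular runs: runs of the component automata viewed as ordinary finite
automata over the alphabet `Σ_int ∪ Σ_proc`. -/
inductive RegRun (A : VRA I C R P Q) : Q → List (I ⊕ P) → Q → Prop
  | nil (q : Q) : RegRun A q [] q
  | int {q q' p : Q} {a : I} {w : List (I ⊕ P)} :
      A.intTrans q a q' → RegRun A q' w p → RegRun A q (Sum.inl a :: w) p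
  | proc {q q' p : Q} {J : P} {w : List (I ⊕ P)} :
      A.procTrans q J q' → RegRun A q' w p → RegRun A q (Sum.inr J :: w) p

/-- The regular language of the component automaton `A^J`, over `Σ_int ∪ Σ_proc`. -/
def RegLang (A : VRA I C R P Q) (J : Option P) : Set (List (I ⊕ P)) :=
  {w | ∃ qi qf, A.comp qi = J ∧ A.init qi ∧ A.comp qf = J ∧ A.final qf ∧
    RegRun A qi w qf}

/-- A VRA is codeterministic if component automata linked to the same call/return
pair have pairwise disjoint recursive languages. -/
def Codeterministic (A : VRA I C R P Q) : Prop :=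
  ∀ J J' : P, J ≠ J' → A.link J = A.link J' →
    A.RecLang (some J) ∩ A.RecLang (some J') = ∅

/-- A VRA is complete if every state has an outgoing transition on every symbol of
`Σ_int ∪ Σ_proc`, and for every call/return pair the recursive languages of the
linked component automata cover all well-matched words. -/
def Complete (A : VRA I C R P Q) : Prop :=
  (∀ (q : Q) (a : I), ∃ p, A.intTrans q a p) ∧
  (∀ (q : Q) (J : P), ∃ p, A.procTrans q J p) ∧
  (∀ (c : C) (r : R),
    (⋃ J ∈ {J : P | A.link J = (c, r)}, A.RecLang (some J)) = {w | WellMatched w})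

/-- A VRA is deterministic if every component automaton (including the starting
one) has a unique initial state and deterministic transitions, and procedural
transitions from a common state on procedural symbols with the same call symbol
agree on the procedural symbol. -/
def Deterministic (A : VRA I C R P Q) : Prop :=
  (∀ J : Option P, ∃! q, A.comp q = J ∧ A.init q) ∧
  (∀ q a p p', A.intTrans q a p → A.intTrans q a p' → p = p') ∧
  (∀ q J p p', A.procTrans q J p → A.procTrans q J p' → p = p') ∧
  (∀ q J J' p p', A.procTrans q J p → A.procTrans q J' p' →
    (A.link J).1 = (A.link J').1 → J = J')

/-- All component automata of the VRA are complete DFAs: a unique initial state in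
each component and exactly one outgoing transition per state and symbol. -/
def AllCompleteDFA (A : VRA I C R P Q) : Prop :=
  (∀ J : Option P, ∃! q, A.comp q = J ∧ A.init q) ∧
  (∀ (q : Q) (a : I), ∃! p, A.intTrans q a p) ∧
  (∀ (q : Q) (J : P), ∃! p, A.procTrans q J p)

/-- The size of a VRA: number of states plus number of transitions. -/
noncomputable def size (A : VRA I C R P Q) : ℕ :=
  Nat.card Q + Nat.card {t : Q × I × Q // A.intTrans t.1 t.2.1 t.2.2}
    + Nat.card {t : Q × P × Q // A.procTrans t.1 t.2.1 t.2.2}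

end VRA

namespace VRA

variable {I C R P₁ P₂ Q₁ Q₂ : Type}

/-- The procedural alphabet of the product VRA: pairs `⟨J₁,J₂⟩` of procedural
symbols with matching call/return pairs, `f₁(J₁) = f₂(J₂)`. -/
def ProdProc (A₁ : VRA I C R P₁ Q₁) (A₂ : VRA I C R P₂ Q₂) : Type :=
  {p : P₁ × P₂ // A₁.link p.1 = A₂.link p.2}

/-- A pair of states is good if both lie in the starting automata, or both lie in
component automata with matching call/return pairs. -/
def GoodPair (A₁ : VRA I C R P₁ Q₁) (A₂ : VRA I C R P₂ Q₂) (x : Q₁ × Q₂) : Prop :=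
  (A₁.comp x.1 = none ∧ A₂.comp x.2 = none) ∨
  ∃ (J₁ : P₁) (J₂ : P₂), A₁.comp x.1 = some J₁ ∧ A₂.comp x.2 = some J₂ ∧
    A₁.link J₁ = A₂.link J₂

/-- The state space of the product VRA: good pairs of states. -/
def ProdState (A₁ : VRA I C R P₁ Q₁) (A₂ : VRA I C R P₂ Q₂) : Type :=
  {x : Q₁ × Q₂ // GoodPair A₁ A₂ x}

open Classical

/-- The component of a pair of states in the product VRA. -/
noncomputable def mergeComp (f₁ : P₁ → C × R) (f₂ : P₂ → C × R) :
    Option P₁ → Option P₂ → Option {p : P₁ × P₂ // f₁ p.1 = f₂ p.2}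
  | some J₁, some J₂ =>
      if h : f₁ J₁ = f₂ J₂ then some ⟨(J₁, J₂), h⟩ else none
  | _, _ => none

/-- The product VRA of `A₁` and `A₂`: procedural symbols are matching pairs,
states are good pairs, initial/final states and transitions are synchronized
componentwise, and the starting automaton is the product of the starting
automata. -/
noncomputable def prod (A₁ : VRA I C R P₁ Q₁) (A₂ : VRA I C R P₂ Q₂) :
    VRA I C R (ProdProc A₁ A₂) (ProdState A₁ A₂) where
  link J := A₁.link J.1.1
  comp x := mergeComp A₁.link A₂.link (A₁.comp x.1.1) (A₂.comp x.1.2)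
  init x := A₁.init x.1.1 ∧ A₂.init x.1.2
  final x := A₁.final x.1.1 ∧ A₂.final x.1.2
  intTrans x a y := A₁.intTrans x.1.1 a y.1.1 ∧ A₂.intTrans x.1.2 a y.1.2
  procTrans x J y := A₁.procTrans x.1.1 J.1.1 y.1.1 ∧ A₂.procTrans x.1.2 J.1.2 y.1.2
  intTrans_comp := by
    rintro x a y ⟨h₁, h₂⟩
    exact congrArg₂ (mergeComp A₁.link A₂.link) (A₁.intTrans_comp h₁) (A₂.intTrans_comp h₂)
  procTrans_comp := by
    rintro x J y ⟨h₁, h₂⟩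
    exact congrArg₂ (mergeComp A₁.link A₂.link) (A₁.procTrans_comp h₁) (A₂.procTrans_comp h₂)

end VRA

/-!
A run of the product projects onto runs of both factors. Conversely, runs of `A₁` and `A₂`
on a well-matched word are zipped together by induction on the word. On a bracket
`call c · w · ret r` the factors enter components `J₁`, `J₂` whose links are both `(c, r)`
(the call fixes the first entry, the matching return the second), so `⟨J₁, J₂⟩` is a
procedural symbol of the product; that a run on a well-matched word stays in its component
and gives back the stack it started from is what keeps all zipped states good pairs.
For the languages, it remains to see that a word read from empty stack to empty stack is
well-matched.
-/

namespace VRA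

section Runs

variable {I C R P Q : Type} {A : VRA I C R P Q}

theorem run_nil_iff {c c' : Q × List Q} : A.Run c [] c' ↔ c = c' := by
  constructor
  · rintro ⟨⟩
    rfl
  · rintro rfl
    exact Run.nil c

theorem run_cons_iff {c c' : Q × List Q} {a : VSym I C R} {w : List (VSym I C R)} :
    A.Run c (a :: w) c' ↔ ∃ d, A.Step c a d ∧ A.Run d w c' := by
  constructor
  · rintro (_ | ⟨hs, hr⟩)
    exact ⟨_, hs, hr⟩
  · rintro ⟨d, hs, hr⟩
    exact Run.cons hs hr

theorem run_singleton_iff {c c' : Q × List Q} {a : VSym I C R} :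
    A.Run c [a] c' ↔ A.Step c a c' := by
  simp only [run_cons_iff, run_nil_iff, exists_eq_right]

theorem run_append_iff {c c' : Q × List Q} {w₁ w₂ : List (VSym I C R)} :
    A.Run c (w₁ ++ w₂) c' ↔ ∃ d, A.Run c w₁ d ∧ A.Run d w₂ c' := by
  induction w₁ generalizing c with
  | nil => simp only [List.nil_append, run_nil_iff, exists_eq_left']
  | cons a w₁ ih =>
    simp only [List.cons_append, run_cons_iff, ih]
    constructor
    · rintro ⟨e, hs, d, h₁, h₂⟩
      exact ⟨d, ⟨e, hs, h₁⟩, h₂⟩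
    · rintro ⟨d, ⟨e, hs, h₁⟩, h₂⟩
      exact ⟨e, hs, d, h₁, h₂⟩

theorem run_int_cons_iff {q : Q} {σ : List Q} {c' : Q × List Q} {a : I}
    {w : List (VSym I C R)} :
    A.Run (q, σ) (VSym.int a :: w) c' ↔ ∃ q', A.intTrans q a q' ∧ A.Run (q', σ) w c' := by
  rw [run_cons_iff]
  constructor
  · rintro ⟨_, ⟨ht⟩, hr⟩
    exact ⟨_, ht, hr⟩
  · rintro ⟨q', ht, hr⟩
    exact ⟨_, .int ht, hr⟩

theorem Run.append_stack {q p : Q} {σ τ : List Q} {w : List (VSym I C R)}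
    (h : A.Run (q, σ) w (p, τ)) (ρ : List Q) : A.Run (q, σ ++ ρ) w (p, τ ++ ρ) := by
  generalize hc : (q, σ) = c at h
  generalize hc' : (p, τ) = c' at h
  induction h generalizing q σ with
  | nil => cases hc; cases hc'; exact Run.nil _
  | cons hs _ ih =>
    cases hc
    cases hs with
    | int ht => exact Run.cons (.int ht) (ih rfl hc')
    | call hp hl hc hi => exact Run.cons (.call hp hl hc hi) (ih rfl hc')
    | ret hc hf hl => exact Run.cons (.ret hc hf hl) (ih rfl hc')

-- Runs on `w` give back the stack they start from, stay in their component, and never read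
-- that stack.
def Balanced (A : VRA I C R P Q) (w : List (VSym I C R)) : Prop :=
  ∀ ⦃q σ p τ⦄, A.Run (q, σ) w (p, τ) → τ = σ ∧ A.comp p = A.comp q ∧ A.Run (q, []) w (p, [])

theorem balanced_nil : A.Balanced [] := by
  intro q σ p τ h
  cases run_nil_iff.1 h
  exact ⟨rfl, rfl, Run.nil _⟩

theorem Balanced.int_cons {w : List (VSym I C R)} (hw : A.Balanced w) (a : I) :
    A.Balanced (VSym.int a :: w) := by
  intro q σ p τ h
  obtain ⟨q', ht, hr⟩ := run_int_cons_iff.1 h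
  obtain ⟨rfl, hc, hr'⟩ := hw hr
  exact ⟨rfl, hc.trans (A.intTrans_comp ht), run_int_cons_iff.2 ⟨q', ht, hr'⟩⟩

theorem Balanced.append {w₁ w₂ : List (VSym I C R)} (hw₁ : A.Balanced w₁)
    (hw₂ : A.Balanced w₂) : A.Balanced (w₁ ++ w₂) := by
  intro q σ p τ h
  obtain ⟨⟨m, ρ⟩, h₁, h₂⟩ := run_append_iff.1 h
  obtain ⟨rfl, hc₁, hr₁⟩ := hw₁ h₁
  obtain ⟨rfl, hc₂, hr₂⟩ := hw₂ h₂
  exact ⟨rfl, hc₂.trans hc₁, run_append_iff.2 ⟨_, hr₁, hr₂⟩⟩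

theorem Balanced.run_bracket_iff {w : List (VSym I C R)} (hw : A.Balanced w) {q p : Q}
    {σ τ : List Q} {c : C} {r : R} :
    A.Run (q, σ) (VSym.call c :: w ++ [VSym.ret r]) (p, τ) ↔ τ = σ ∧
      ∃ J q' m, A.procTrans q J p ∧ A.link J = (c, r) ∧ A.comp q' = some J ∧ A.init q' ∧
        A.comp m = some J ∧ A.final m ∧ A.Run (q', []) w (m, []) := by
  rw [List.cons_append, run_cons_iff]
  constructor
  · rintro ⟨_, hcall, hrest⟩
    cases hcall with
    | @call _ q' t _ J _ hp hlc hc hi =>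
      obtain ⟨⟨m, ρ⟩, hr, hret⟩ := run_append_iff.1 hrest
      obtain ⟨rfl, hcm, hr'⟩ := hw hr
      cases run_singleton_iff.1 hret with
      | ret hcm' hf hlr =>
        -- the return leaves the component that the call entered
        cases (hcm.trans hc).symm.trans hcm'
        exact ⟨rfl, J, q', m, hp, Prod.ext hlc hlr, hc, hi, hcm', hf, hr'⟩
  · rintro ⟨rfl, J, q', m, hp, hl, hc, hi, hcm, hf, hr⟩
    refine ⟨_, .call hp (congrArg Prod.fst hl) hc hi, run_append_iff.2 ⟨(m, p :: τ), ?_, ?_⟩⟩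
    · exact hr.append_stack (p :: τ)
    · exact run_singleton_iff.2 (.ret hcm hf (congrArg Prod.snd hl))

theorem Balanced.bracket {w : List (VSym I C R)} (hw : A.Balanced w) (c : C) (r : R) :
    A.Balanced (VSym.call c :: w ++ [VSym.ret r]) := by
  intro q σ p τ h
  obtain ⟨rfl, hbracket⟩ := hw.run_bracket_iff.1 h
  obtain ⟨J, q', m, hp, -⟩ := id hbracket
  exact ⟨rfl, A.procTrans_comp hp, hw.run_bracket_iff.2 ⟨rfl, hbracket⟩⟩

theorem _root_.WellMatched.balanced {w : List (VSym I C R)} (hw : WellMatched w) :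
    A.Balanced w := by
  induction hw with
  | internal u =>
    induction u with
    | nil => exact balanced_nil
    | cons a u ih => exact ih.int_cons a
  | bracket c r _ ih => exact ih.bracket c r
  | concat _ _ ih₁ ih₂ => exact ih₁.append ih₂

-- `k + 1` well-matched words separated by `k` returns: what can be read from a stack of
-- height `k` down to the empty stack.
def PendingRets : ℕ → List (VSym I C R) → Prop
  | 0, w => WellMatched w
  | k + 1, w => ∃ u r v, WellMatched u ∧ PendingRets k v ∧ w = u ++ VSym.ret r :: v

theorem PendingRets.wellMatched_append {k : ℕ} {u v : List (VSym I C R)}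
    (hu : WellMatched u) (hv : PendingRets k v) : PendingRets k (u ++ v) := by
  cases k with
  | zero => exact hu.concat hv
  | succ k =>
    obtain ⟨u', r, v', hu', hv', rfl⟩ := hv
    exact ⟨u ++ u', r, v', hu.concat hu', hv', by simp⟩

theorem PendingRets.int_cons {k : ℕ} {w : List (VSym I C R)} (h : PendingRets k w) (a : I) :
    PendingRets k (VSym.int a :: w) :=
  wellMatched_append (WellMatched.internal [a]) h

theorem PendingRets.call_cons {k : ℕ} {w : List (VSym I C R)} (h : PendingRets (k + 1) w)
    (c : C) : PendingRets k (VSym.call c :: w) := by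
  obtain ⟨u, r, v, hu, hv, rfl⟩ := h
  simpa using wellMatched_append (hu.bracket c r) hv

theorem PendingRets.ret_cons {k : ℕ} {w : List (VSym I C R)} (h : PendingRets k w) (r : R) :
    PendingRets (k + 1) (VSym.ret r :: w) :=
  ⟨[], r, w, WellMatched.internal [], h, rfl⟩

theorem Run.pendingRets {q p : Q} {σ : List Q} {w : List (VSym I C R)}
    (h : A.Run (q, σ) w (p, [])) : PendingRets σ.length w := by
  generalize hc : (q, σ) = c at h
  generalize hc' : (p, ([] : List Q)) = c' at h
  induction h generalizing q σ with
  | nil => cases hc; cases hc'; exact WellMatched.internal []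
  | cons hs _ ih =>
    cases hc
    cases hs with
    | int => exact (ih rfl hc').int_cons _
    | call => exact (ih rfl hc').call_cons _
    | ret => exact (ih rfl hc').ret_cons _

theorem Run.wellMatched {q p : Q} {w : List (VSym I C R)} (h : A.Run (q, []) w (p, [])) :
    WellMatched w :=
  h.pendingRets

end Runs

end VRA

namespace VRA

section Hom

variable {I C R P Q P' Q' : Type}

structure Hom (A : VRA I C R P Q) (B : VRA I C R P' Q') where
  state : Q → Q'
  proc : P → P'
  link_proc : ∀ J, B.link (proc J) = A.link J
  comp_state : ∀ ⦃q J⦄, A.comp q = some J → B.comp (state q) = some (proc J)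
  init_state : ∀ ⦃q⦄, A.init q → B.init (state q)
  final_state : ∀ ⦃q⦄, A.final q → B.final (state q)
  intTrans_state : ∀ ⦃q a p⦄, A.intTrans q a p → B.intTrans (state q) a (state p)
  procTrans_state : ∀ ⦃q J p⦄, A.procTrans q J p → B.procTrans (state q) (proc J) (state p)

variable {A : VRA I C R P Q} {B : VRA I C R P' Q'}

theorem Hom.map_step (f : A.Hom B) {c c' : Q × List Q} {a : VSym I C R}
    (h : A.Step c a c') :
    B.Step (f.state c.1, c.2.map f.state) a (f.state c'.1, c'.2.map f.state) := by
  cases h with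
  | int ht => exact .int (f.intTrans_state ht)
  | call hp hl hc hi =>
    exact .call (f.procTrans_state hp) ((f.link_proc _).symm ▸ hl) (f.comp_state hc)
      (f.init_state hi)
  | ret hc hf hl => exact .ret (f.comp_state hc) (f.final_state hf) ((f.link_proc _).symm ▸ hl)

theorem Hom.map_run (f : A.Hom B) {c c' : Q × List Q} {w : List (VSym I C R)}
    (h : A.Run c w c') :
    B.Run (f.state c.1, c.2.map f.state) w (f.state c'.1, c'.2.map f.state) := by
  induction h with
  | nil => exact Run.nil _
  | cons hs _ ih => exact Run.cons (f.map_step hs) ih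

end Hom

section Prod

variable {I C R P₁ P₂ Q₁ Q₂ : Type}

theorem mergeComp_eq_some_iff {f₁ : P₁ → C × R} {f₂ : P₂ → C × R} {o₁ : Option P₁}
    {o₂ : Option P₂} {J : {p : P₁ × P₂ // f₁ p.1 = f₂ p.2}} :
    mergeComp f₁ f₂ o₁ o₂ = some J ↔ o₁ = some J.1.1 ∧ o₂ = some J.1.2 := by
  rcases o₁ with _ | J₁ <;> rcases o₂ with _ | J₂ <;> simp only [mergeComp, reduceCtorEq,
    false_and, and_false, Option.some.injEq]
  split_ifs with hJ
  · rw [Option.some.injEq, Subtype.ext_iff, Prod.ext_iff, eq_comm, eq_comm (a := J₂)]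
  · simp only [false_iff, not_and]
    rintro rfl rfl
    exact hJ J.2

variable (A₁ : VRA I C R P₁ Q₁) (A₂ : VRA I C R P₂ Q₂)

theorem prod_comp_eq_some_iff {x : ProdState A₁ A₂} {J : ProdProc A₁ A₂} :
    (A₁.prod A₂).comp x = some J ↔ A₁.comp x.1.1 = some J.1.1 ∧ A₂.comp x.1.2 = some J.1.2 :=
  mergeComp_eq_some_iff

theorem prod_comp_eq_none_iff {x : ProdState A₁ A₂} :
    (A₁.prod A₂).comp x = none ↔ A₁.comp x.1.1 = none ∧ A₂.comp x.1.2 = none := by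
  constructor
  · intro h
    rcases x.2 with hnone | ⟨J₁, J₂, h₁, h₂, hJ⟩
    · exact hnone
    · have := (prod_comp_eq_some_iff A₁ A₂ (J := ⟨(J₁, J₂), hJ⟩)).2 ⟨h₁, h₂⟩
      simp [h] at this
  · rintro ⟨h₁, h₂⟩
    show mergeComp A₁.link A₂.link _ _ = none
    rw [h₁, h₂]
    rfl

def fstHom : (A₁.prod A₂).Hom A₁ where
  state x := x.1.1
  proc J := J.1.1
  link_proc _ := rfl
  comp_state _ _ h := ((prod_comp_eq_some_iff A₁ A₂).1 h).1
  init_state _ h := h.1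
  final_state _ h := h.1
  intTrans_state _ _ _ h := h.1
  procTrans_state _ _ _ h := h.1

def sndHom : (A₁.prod A₂).Hom A₂ where
  state x := x.1.2
  proc J := J.1.2
  link_proc J := J.2.symm
  comp_state _ _ h := ((prod_comp_eq_some_iff A₁ A₂).1 h).2
  init_state _ h := h.2
  final_state _ h := h.2
  intTrans_state _ _ _ h := h.2
  procTrans_state _ _ _ h := h.2

variable {A₁ A₂}

theorem GoodPair.of_comp_eq {x y : Q₁ × Q₂} (hx : GoodPair A₁ A₂ x)
    (h₁ : A₁.comp y.1 = A₁.comp x.1) (h₂ : A₂.comp y.2 = A₂.comp x.2) : GoodPair A₁ A₂ y := by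
  rcases hx with ⟨c₁, c₂⟩ | ⟨J₁, J₂, c₁, c₂, hJ⟩
  · exact .inl ⟨h₁.trans c₁, h₂.trans c₂⟩
  · exact .inr ⟨J₁, J₂, h₁.trans c₁, h₂.trans c₂, hJ⟩

theorem prod_run_of_wellMatched {w : List (VSym I C R)} (hw : WellMatched w)
    {q p : ProdState A₁ A₂} (h₁ : A₁.Run (q.1.1, []) w (p.1.1, []))
    (h₂ : A₂.Run (q.1.2, []) w (p.1.2, [])) : (A₁.prod A₂).Run (q, []) w (p, []) := by
  induction hw generalizing q p with
  | internal u =>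
    induction u generalizing q with
    | nil =>
      obtain rfl : q = p := Subtype.ext (Prod.ext_iff.2
        ⟨(Prod.ext_iff.1 (run_nil_iff.1 h₁)).1, (Prod.ext_iff.1 (run_nil_iff.1 h₂)).1⟩)
      exact Run.nil _
    | cons a u ih =>
      obtain ⟨q₁', ht₁, h₁⟩ := run_int_cons_iff.1 h₁
      obtain ⟨q₂', ht₂, h₂⟩ := run_int_cons_iff.1 h₂
      have hq' : GoodPair A₁ A₂ (q₁', q₂') :=
        q.2.of_comp_eq (A₁.intTrans_comp ht₁) (A₂.intTrans_comp ht₂)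
      exact run_int_cons_iff.2 ⟨⟨_, hq'⟩, ⟨ht₁, ht₂⟩, ih h₁ h₂⟩
  | bracket c r hw ih =>
    obtain ⟨-, J₁, q₁', m₁, hp₁, hl₁, hc₁, hi₁, hm₁, hf₁, h₁⟩ := hw.balanced.run_bracket_iff.1 h₁
    obtain ⟨-, J₂, q₂', m₂, hp₂, hl₂, hc₂, hi₂, hm₂, hf₂, h₂⟩ := hw.balanced.run_bracket_iff.1 h₂
    have hJ : A₁.link J₁ = A₂.link J₂ := hl₁.trans hl₂.symm
    let q' : ProdState A₁ A₂ := ⟨(q₁', q₂'), .inr ⟨J₁, J₂, hc₁, hc₂, hJ⟩⟩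
    let m : ProdState A₁ A₂ := ⟨(m₁, m₂), .inr ⟨J₁, J₂, hm₁, hm₂, hJ⟩⟩
    refine hw.balanced.run_bracket_iff.2 ⟨rfl, ⟨(J₁, J₂), hJ⟩, q', m, ⟨hp₁, hp₂⟩, hl₁, ?_,
      ⟨hi₁, hi₂⟩, ?_, ⟨hf₁, hf₂⟩, ih (q := q') (p := m) h₁ h₂⟩
    · exact (prod_comp_eq_some_iff A₁ A₂).2 ⟨hc₁, hc₂⟩
    · exact (prod_comp_eq_some_iff A₁ A₂).2 ⟨hm₁, hm₂⟩
  | concat hw₁ _ ih₁ ih₂ =>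
    obtain ⟨⟨m₁, ρ₁⟩, h₁, h₁'⟩ := run_append_iff.1 h₁
    obtain ⟨⟨m₂, ρ₂⟩, h₂, h₂'⟩ := run_append_iff.1 h₂
    obtain ⟨rfl, hc₁, -⟩ := hw₁.balanced h₁
    obtain ⟨rfl, hc₂, -⟩ := hw₁.balanced h₂
    let m : ProdState A₁ A₂ := ⟨(m₁, m₂), q.2.of_comp_eq hc₁ hc₂⟩
    exact run_append_iff.2 ⟨(m, []), ih₁ (p := m) h₁ h₂, ih₂ (q := m) h₁' h₂'⟩

theorem prod_run_iff {w : List (VSym I C R)} (hw : WellMatched w) {q p : ProdState A₁ A₂} :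
    (A₁.prod A₂).Run (q, []) w (p, []) ↔
      A₁.Run (q.1.1, []) w (p.1.1, []) ∧ A₂.Run (q.1.2, []) w (p.1.2, []) :=
  ⟨fun h => ⟨(fstHom A₁ A₂).map_run h, (sndHom A₁ A₂).map_run h⟩,
    fun ⟨h₁, h₂⟩ => prod_run_of_wellMatched hw h₁ h₂⟩

end Prod

end VRA

/-- for the product VRA `B = A₁ × A₂`, a recursive run on a
well-matched word `w` from `⟨⟨q₁,q₂⟩,ε⟩` to `⟨⟨p₁,p₂⟩,ε⟩` exists iff the
corresponding recursive runs exist in `A₁` and in `A₂`; consequently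
`L(B) = L(A₁) ∩ L(A₂)`. -/
theorem VRA.prod_correct {I C R P₁ P₂ Q₁ Q₂ : Type}
    (A₁ : VRA I C R P₁ Q₁) (A₂ : VRA I C R P₂ Q₂) :
    (∀ (w : List (VSym I C R)), WellMatched w →
      ∀ q p : VRA.ProdState A₁ A₂,
        (A₁.prod A₂).Run (q, []) w (p, []) ↔
          (A₁.Run (q.1.1, []) w (p.1.1, []) ∧ A₂.Run (q.1.2, []) w (p.1.2, []))) ∧
    (A₁.prod A₂).Lang = A₁.Lang ∩ A₂.Lang := by
  refine ⟨fun w hw q p => prod_run_iff hw, Set.ext fun w => ⟨?_, ?_⟩⟩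
  · rintro ⟨qi, qf, hci, hii, hcf, hif, h⟩
    rw [prod_comp_eq_none_iff] at hci hcf
    obtain ⟨h₁, h₂⟩ := (prod_run_iff h.wellMatched).1 h
    exact ⟨⟨_, _, hci.1, hii.1, hcf.1, hif.1, h₁⟩, ⟨_, _, hci.2, hii.2, hcf.2, hif.2, h₂⟩⟩
  · rintro ⟨⟨qi₁, qf₁, hci₁, hii₁, hcf₁, hif₁, h₁⟩, ⟨qi₂, qf₂, hci₂, hii₂, hcf₂, hif₂, h₂⟩⟩
    exact ⟨⟨(qi₁, qi₂), .inl ⟨hci₁, hci₂⟩⟩, ⟨(qf₁, qf₂), .inl ⟨hcf₁, hcf₂⟩⟩,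
      (prod_comp_eq_none_iff A₁ A₂).2 ⟨hci₁, hci₂⟩, ⟨hii₁, hii₂⟩,
      (prod_comp_eq_none_iff A₁ A₂).2 ⟨hcf₁, hcf₂⟩, ⟨hif₁, hif₂⟩,
      (prod_run_iff h₁.wellMatched).2 ⟨h₁, h₂⟩⟩
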